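/- Let k be an odd positive integer, i a positive integer with gcd(i,k) = 1, t a natural number with 0 ≤ t ≤ k−1, e = (2^i + 1)·2^t, F = GaloisField 2 k, and α ∈ F with α ≠ 0 and α ≠ 1. Define V : F × F → F × F by V(x,y) = ((αx + y)^e + x^e, (x + αy)^e + y^e). Then V has algebraic degree 2; precisely: (a) for all (u1,v1), (u2,v2) ∈ F × F, the function (x,y) ↦ V(x+u1+u2, y+v1+v2) + V(x+u1, y+v1) + V(x+u2, y+v2) + V(x,y) is constant on F × F, and (b) there exists (u,v) ∈ F × F such that the function (x,y) ↦ V(x+u, y+v) + V(x,y) is not constant on F × F. -/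

import Mathlib

/-!
In characteristic 2, with `e = (2^i + 1)·2^t`, Frobenius gives
`(a + b)^e = a^e + b^e + B(a, b)` where
`B(a, b) = goldPolar i t a b = (a^(2^i) b + a b^(2^i))^(2^t)` is biadditive.
Hence the second derivative of `z ↦ z^e` in directions `a, b` is the constant `B(a, b)`, and each
coordinate of the butterfly, a sum of such powers of linear forms, has constant second derivatives.
The derivative of the first coordinate in direction `(0, 1)` is `1 + B(αx + y, 1)`: it is `1` at the
origin and `1 + (α^(2^i) + α)^(2^t)` at `(0, α)`. These differ, since `α^(2^i) = α` together with
`α^(2^k) = α` and `gcd(i, k) = 1` would give `α^2 = α`.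
-/

/-- The closed butterfly with branch size `k`, exponent `e` and coefficient `α`. -/
noncomputable def closedButterfly (k e : ℕ) (α : GaloisField 2 k) :
    GaloisField 2 k × GaloisField 2 k → GaloisField 2 k × GaloisField 2 k :=
  fun p => ((α * p.1 + p.2) ^ e + p.1 ^ e, (p.1 + α * p.2) ^ e + p.2 ^ e)

open Function

lemma pow_pow_gcd_eq_self {M : Type*} [Monoid M] {x : M} {p m n : ℕ}
    (hm : x ^ p ^ m = x) (hn : x ^ p ^ n = x) : x ^ p ^ m.gcd n = x := by
  have periodic {l : ℕ} (h : x ^ p ^ l = x) : IsPeriodicPt (· ^ p) l x := by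
    rwa [IsPeriodicPt, IsFixedPt, pow_iterate]
  simpa [IsPeriodicPt, IsFixedPt, pow_iterate] using (periodic hm).gcd (periodic hn)

lemma GaloisField.pow_pow_eq_self (p : ℕ) [Fact p.Prime] {k : ℕ} (hk : k ≠ 0)
    (x : GaloisField p k) : x ^ p ^ k = x := by
  have := Fintype.ofFinite (GaloisField p k)
  rw [← GaloisField.card p k hk, Nat.card_eq_fintype_card, FiniteField.pow_card]

lemma GaloisField.eq_zero_or_one_of_pow_two_pow_eq_self {k i : ℕ} (hk : k ≠ 0)
    (hgcd : i.gcd k = 1) {x : GaloisField 2 k} (hx : x ^ 2 ^ i = x) : x = 0 ∨ x = 1 := by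
  apply eq_zero_or_one_of_sq_eq_self
  simpa [hgcd] using pow_pow_gcd_eq_self hx (pow_pow_eq_self 2 hk x)

section CharTwo

variable {R : Type*} [CommRing R] [CharP R 2]

def goldPolar (i t : ℕ) (a b : R) : R := (a ^ 2 ^ i * b + a * b ^ 2 ^ i) ^ 2 ^ t

lemma goldPolar_add_left (i t : ℕ) (a a' b : R) :
    goldPolar i t (a + a') b = goldPolar i t a b + goldPolar i t a' b := by
  simp only [goldPolar]
  rw [← add_pow_char_pow]
  congr 1
  rw [add_pow_char_pow]
  ring

lemma add_pow_gold (i t : ℕ) (a b : R) :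
    (a + b) ^ ((2 ^ i + 1) * 2 ^ t)
      = a ^ ((2 ^ i + 1) * 2 ^ t) + b ^ ((2 ^ i + 1) * 2 ^ t) + goldPolar i t a b := by
  have gold : (a + b) ^ (2 ^ i + 1) = a ^ (2 ^ i + 1) + b ^ (2 ^ i + 1)
      + (a ^ 2 ^ i * b + a * b ^ 2 ^ i) := by
    rw [pow_succ, add_pow_char_pow]; ring
  rw [pow_mul, gold, add_pow_char_pow, add_pow_char_pow, ← pow_mul, ← pow_mul, goldPolar]

lemma pow_gold_second_diff (i t : ℕ) (z a b : R) :
    (z + a + b) ^ ((2 ^ i + 1) * 2 ^ t) + (z + a) ^ ((2 ^ i + 1) * 2 ^ t)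
      + (z + b) ^ ((2 ^ i + 1) * 2 ^ t) + z ^ ((2 ^ i + 1) * 2 ^ t) = goldPolar i t a b := by
  rw [add_pow_gold i t (z + a) b, add_pow_gold i t z b, goldPolar_add_left]
  linear_combination CharTwo.add_self_eq_zero ((z + a) ^ ((2 ^ i + 1) * 2 ^ t)
    + b ^ ((2 ^ i + 1) * 2 ^ t) + z ^ ((2 ^ i + 1) * 2 ^ t) + goldPolar i t z b)

lemma goldPolar_one_right_eq_zero_iff [NoZeroDivisors R] (i t : ℕ) (a : R) :
    goldPolar i t a 1 = 0 ↔ a ^ 2 ^ i = a := by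
  simp [goldPolar, CharTwo.add_eq_zero]

end CharTwo

section ClosedButterfly

variable (k i t : ℕ) (α : GaloisField 2 k)

lemma closedButterfly_second_diff (u₁ v₁ u₂ v₂ x y : GaloisField 2 k) :
    closedButterfly k ((2 ^ i + 1) * 2 ^ t) α (x + u₁ + u₂, y + v₁ + v₂)
      + closedButterfly k ((2 ^ i + 1) * 2 ^ t) α (x + u₁, y + v₁)
      + closedButterfly k ((2 ^ i + 1) * 2 ^ t) α (x + u₂, y + v₂)
      + closedButterfly k ((2 ^ i + 1) * 2 ^ t) α (x, y)
      = (goldPolar i t (α * u₁ + v₁) (α * u₂ + v₂) + goldPolar i t u₁ u₂,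
          goldPolar i t (u₁ + α * v₁) (u₂ + α * v₂) + goldPolar i t v₁ v₂) := by
  simp only [closedButterfly, Prod.mk_add_mk, Prod.mk.injEq]
  constructor
  · linear_combination pow_gold_second_diff i t (α * x + y) (α * u₁ + v₁) (α * u₂ + v₂)
      + pow_gold_second_diff i t x u₁ u₂
  · linear_combination pow_gold_second_diff i t (x + α * y) (u₁ + α * v₁) (u₂ + α * v₂)
      + pow_gold_second_diff i t y v₁ v₂

lemma closedButterfly_fst_diff_snd_one (x y : GaloisField 2 k) :
    (closedButterfly k ((2 ^ i + 1) * 2 ^ t) α (x + 0, y + 1)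
      + closedButterfly k ((2 ^ i + 1) * 2 ^ t) α (x, y)).1 = 1 + goldPolar i t (α * x + y) 1 := by
  simp only [closedButterfly, Prod.fst_add]
  linear_combination add_pow_gold i t (α * x + y) 1
    + CharTwo.add_self_eq_zero (x ^ ((2 ^ i + 1) * 2 ^ t) + (α * x + y) ^ ((2 ^ i + 1) * 2 ^ t))

end ClosedButterfly

theorem closedButterfly_algebraic_degree_two_general (k i t : ℕ)
    (hkpos : 0 < k) (hgcd : Nat.gcd i k = 1)
    (α : GaloisField 2 k) (hα0 : α ≠ 0) (hα1 : α ≠ 1) :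
    (∀ u1 v1 u2 v2 : GaloisField 2 k, ∃ C : GaloisField 2 k × GaloisField 2 k,
      ∀ x y : GaloisField 2 k,
        closedButterfly k ((2 ^ i + 1) * 2 ^ t) α (x + u1 + u2, y + v1 + v2)
          + closedButterfly k ((2 ^ i + 1) * 2 ^ t) α (x + u1, y + v1)
          + closedButterfly k ((2 ^ i + 1) * 2 ^ t) α (x + u2, y + v2)
          + closedButterfly k ((2 ^ i + 1) * 2 ^ t) α (x, y) = C) ∧
    (∃ u v : GaloisField 2 k, ¬ ∃ C : GaloisField 2 k × GaloisField 2 k,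
      ∀ x y : GaloisField 2 k,
        closedButterfly k ((2 ^ i + 1) * 2 ^ t) α (x + u, y + v)
          + closedButterfly k ((2 ^ i + 1) * 2 ^ t) α (x, y) = C) := by
  refine ⟨fun u₁ v₁ u₂ v₂ => ⟨_, closedButterfly_second_diff k i t α u₁ v₁ u₂ v₂⟩, 0, 1, ?_⟩
  rintro ⟨C, hC⟩
  have at_origin := closedButterfly_fst_diff_snd_one k i t α 0 0
  have at_alpha := closedButterfly_fst_diff_snd_one k i t α 0 α
  rw [hC] at at_origin at_alpha
  have hpolar : goldPolar i t α 1 = 0 := by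
    simpa [goldPolar, at_origin] using at_alpha.symm
  rcases GaloisField.eq_zero_or_one_of_pow_two_pow_eq_self hkpos.ne' hgcd
    ((goldPolar_one_right_eq_zero_iff i t α).mp hpolar) with h | h
  exacts [hα0 h, hα1 h]

/-- Theorem 3.4 (1): the closed butterfly with `k` odd, `gcd(i,k) = 1`, exponent
`e = (2^i+1)·2^t` and coefficient `α ≠ 0, 1` has algebraic degree 2: all second-order
discrete derivatives are constant, and some first-order derivative is not constant. -/
theorem closedButterfly_algebraic_degree_two (k i t : ℕ) (hk : Odd k)
    (hkpos : 0 < k) (hipos : 0 < i) (hgcd : Nat.gcd i k = 1) (ht : t ≤ k - 1)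
    (α : GaloisField 2 k) (hα0 : α ≠ 0) (hα1 : α ≠ 1) :
    (∀ u1 v1 u2 v2 : GaloisField 2 k, ∃ C : GaloisField 2 k × GaloisField 2 k,
      ∀ x y : GaloisField 2 k,
        closedButterfly k ((2 ^ i + 1) * 2 ^ t) α (x + u1 + u2, y + v1 + v2)
          + closedButterfly k ((2 ^ i + 1) * 2 ^ t) α (x + u1, y + v1)
          + closedButterfly k ((2 ^ i + 1) * 2 ^ t) α (x + u2, y + v2)
          + closedButterfly k ((2 ^ i + 1) * 2 ^ t) α (x, y) = C) ∧
    (∃ u v : GaloisField 2 k, ¬ ∃ C : GaloisField 2 k × GaloisField 2 k,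
      ∀ x y : GaloisField 2 k,
        closedButterfly k ((2 ^ i + 1) * 2 ^ t) α (x + u, y + v)
          + closedButterfly k ((2 ^ i + 1) * 2 ^ t) α (x, y) = C) :=
  closedButterfly_algebraic_degree_two_general k i t hkpos hgcd α hα0 hα1
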